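/- Consider the accelerated gradient iteration on a convex differentiable function f: ℝ^n → ℝ with L-Lipschitz gradient: v^k = λ^k + ((k−1)/(k+2))(λ^k − λ^{k−1}), λ^{k+1} = v^k − (1/L)∇f(v^k), initialized with λ^0 = λ^{−1}. If f attains its minimum f* at some λ*, then f(λ^k) − f* ≤ 2L‖λ^0 − λ*‖² / (k+1)² for all k ≥ 1. -/

import Mathlib

/-!
Nesterov's potential argument with weights `t k = (k + 1) / 2`. A gradient step
`p = y - (1 / L) • f' y` satisfies `f p - f z ≤ L ⟪y - p, y - z⟫ - L / 2 ‖y - p‖²` for every `z`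
(descent lemma plus the tangent inequality of convexity). Adding this inequality at `z = λₖ` with
weight `t (k+1) - 1` to the one at `z = λ*` and completing the square shows that
`Eₖ = tₖ² (f λₖ - f λ*) + L / 2 ‖tₖ λₖ - (tₖ - 1) λₖ₋₁ - λ*‖²` does not increase: the momentum
coefficient `(k - 1) / (k + 2) = (tₖ - 1) / t (k+1)` turns `t (k+1) vₖ - (t (k+1) - 1) λₖ` into
`tₖ λₖ - (tₖ - 1) λₖ₋₁`, and `t (k+1)² - t (k+1) ≤ tₖ²`. As `E₁ ≤ L / 2 ‖λ₀ - λ*‖²`, this gives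
`tₖ² (f λₖ - f λ*) ≤ L / 2 ‖λ₀ - λ*‖²`.
-/

open RealInnerProductSpace

section Gradient

variable {E : Type*} [NormedAddCommGroup E] [InnerProductSpace ℝ E] [CompleteSpace E]
  {f : E → ℝ} {f' : E → E}

theorem HasGradientAt.hasDerivAt_add_smul {g x y : E} {t : ℝ}
    (hf : HasGradientAt f g (x + t • (y - x))) :
    HasDerivAt (fun s : ℝ => f (x + s • (y - x))) ⟪g, y - x⟫ t := by
  have hline : HasDerivAt (fun s : ℝ => x + s • (y - x)) (y - x) t := by
    simpa using ((hasDerivAt_id t).smul_const (y - x)).const_add x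
  simpa [InnerProductSpace.toDual_apply_apply, Function.comp_def] using
    hf.hasFDerivAt.comp_hasDerivAt t hline

theorem ConvexOn.add_inner_le_of_hasGradientAt (hf : ConvexOn ℝ Set.univ f) {g x : E}
    (hg : HasGradientAt f g x) (y : E) : f x + ⟪g, y - x⟫ ≤ f y := by
  have hline : ConvexOn ℝ Set.univ (fun s : ℝ => f (x + s • (y - x))) := by
    simpa [Function.comp_def] using hf.comp_affineMap
      (AffineMap.const ℝ ℝ x + (LinearMap.toSpanSingleton ℝ E (y - x)).toAffineMap)
  have h := hline.le_slope_of_hasDerivAt (Set.mem_univ 0) (Set.mem_univ 1) one_pos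
    (HasGradientAt.hasDerivAt_add_smul (by simpa using hg))
  simp only [slope_def_field, zero_smul, add_zero, one_smul, add_sub_cancel, sub_zero,
    div_one] at h
  linarith

theorem LipschitzWith.le_add_inner_add_of_hasGradientAt {K : NNReal}
    (hlip : LipschitzWith K f') (hf : ∀ z, HasGradientAt f (f' z) z) (x y : E) :
    f y ≤ f x + ⟪f' x, y - x⟫ + K / 2 * ‖y - x‖ ^ 2 := by
  set g : ℝ → ℝ := fun t =>
    f (x + t • (y - x)) - t * ⟪f' x, y - x⟫ - K / 2 * t ^ 2 * ‖y - x‖ ^ 2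
  have hg : ∀ t : ℝ, HasDerivAt g
      (⟪f' (x + t • (y - x)) - f' x, y - x⟫ - K * t * ‖y - x‖ ^ 2) t := by
    intro t
    have hlin : HasDerivAt (fun s : ℝ => s * ⟪f' x, y - x⟫) ⟪f' x, y - x⟫ t := by
      simpa using (hasDerivAt_id t).mul_const _
    have hquad : HasDerivAt (fun s : ℝ => K / 2 * s ^ 2 * ‖y - x‖ ^ 2)
        (K * t * ‖y - x‖ ^ 2) t :=
      (((hasDerivAt_pow 2 t).const_mul (K / 2 : ℝ)).mul_const (‖y - x‖ ^ 2)).congr_deriv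
        (by ring)
    rw [inner_sub_left]
    exact ((hf _).hasDerivAt_add_smul.sub hlin).sub hquad
  have hanti : AntitoneOn g (Set.Icc 0 1) := by
    refine antitoneOn_of_deriv_nonpos (convex_Icc 0 1)
      (fun t _ => (hg t).continuousAt.continuousWithinAt)
      (fun t _ => (hg t).differentiableAt.differentiableWithinAt) fun t ht => ?_
    rw [interior_Icc] at ht
    rw [(hg t).deriv, sub_nonpos]
    calc ⟪f' (x + t • (y - x)) - f' x, y - x⟫
        ≤ ‖f' (x + t • (y - x)) - f' x‖ * ‖y - x‖ := real_inner_le_norm _ _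
      _ ≤ K * ‖t • (y - x)‖ * ‖y - x‖ := by
          gcongr
          simpa [dist_eq_norm] using hlip.dist_le_mul (x + t • (y - x)) x
      _ = K * t * ‖y - x‖ ^ 2 := by rw [norm_smul, Real.norm_of_nonneg ht.1.le]; ring
  have h01 := hanti (Set.left_mem_Icc.2 zero_le_one) (Set.right_mem_Icc.2 zero_le_one)
    zero_le_one
  simp only [g, zero_smul, add_zero, one_smul, add_sub_cancel, zero_mul, sub_zero, one_mul,
    one_pow, ne_eq, OfNat.ofNat_ne_zero, not_false_eq_true, zero_pow, mul_zero] at h01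
  linarith

theorem ConvexOn.gradientStep_sub_le {L : ℝ} (hf : ConvexOn ℝ Set.univ f)
    (hgrad : ∀ z, HasGradientAt f (f' z) z) (hL : 0 < L) (hlip : LipschitzWith L.toNNReal f')
    {y p : E} (hp : p = y - (1 / L) • f' y) (z : E) :
    f p - f z ≤ L * ⟪y - p, y - z⟫ - L / 2 * ‖y - p‖ ^ 2 := by
  have hgrad_y : f' y = L • (y - p) := by
    rw [hp, sub_sub_cancel, smul_smul, mul_one_div_cancel hL.ne', one_smul]
  have hdescent := hlip.le_add_inner_add_of_hasGradientAt hgrad y p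
  have htangent := hf.add_inner_le_of_hasGradientAt (hgrad y) z
  rw [Real.coe_toNNReal _ hL.le, hgrad_y, ← neg_sub y p, inner_neg_right, real_inner_smul_left,
    real_inner_self_eq_norm_sq, norm_neg] at hdescent
  rw [hgrad_y, ← neg_sub y z, inner_neg_right, real_inner_smul_left] at htangent
  linarith

end Gradient

section Potential

variable {E : Type*} [NormedAddCommGroup E] [InnerProductSpace ℝ E] {f : E → ℝ} {L : ℝ}

theorem potential_le_of_gradientStep {t : ℝ} {x y p xs : E} (ht : 1 ≤ t)
    (hstep : ∀ z, f p - f z ≤ L * ⟪y - p, y - z⟫ - L / 2 * ‖y - p‖ ^ 2) :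
    t ^ 2 * (f p - f xs) + L / 2 * ‖t • p - (t - 1) • x - xs‖ ^ 2 ≤
      (t ^ 2 - t) * (f x - f xs) + L / 2 * ‖t • y - (t - 1) • x - xs‖ ^ 2 := by
  set a := t • y - (t - 1) • x - xs
  have hb : t • p - (t - 1) • x - xs = a - t • (y - p) := by module
  have ha : a = (t - 1) • (y - x) + (y - xs) := by module
  have hx := mul_le_mul_of_nonneg_left (hstep x) (sub_nonneg.2 ht)
  have hxs := hstep xs
  have hdecrease : t * ((t - 1) * (f p - f x) + (f p - f xs)) ≤
      t * ((t - 1) * (L * ⟪y - p, y - x⟫ - L / 2 * ‖y - p‖ ^ 2) +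
        (L * ⟪y - p, y - xs⟫ - L / 2 * ‖y - p‖ ^ 2)) :=
    mul_le_mul_of_nonneg_left (add_le_add hx hxs) (by linarith)
  have hinner : ⟪a, y - p⟫ = (t - 1) * ⟪y - p, y - x⟫ + ⟪y - p, y - xs⟫ := by
    rw [ha, inner_add_left, real_inner_smul_left, real_inner_comm (y - x),
      real_inner_comm (y - xs)]
  rw [hb, norm_sub_sq_real, real_inner_smul_right, hinner, norm_smul,
    Real.norm_of_nonneg (by linarith)]
  linear_combination hdecrease

noncomputable def nesterovPotential (f : E → ℝ) (L : ℝ) (lam : ℕ → E) (xstar : E) (k : ℕ) :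
    ℝ :=
  ((k + 1) / 2 : ℝ) ^ 2 * (f (lam k) - f xstar) +
    L / 2 * ‖((k + 1) / 2 : ℝ) • lam k - ((k + 1) / 2 - 1 : ℝ) • lam (k - 1) - xstar‖ ^ 2

variable {lam v : ℕ → E} {xstar : E}

theorem nesterov_momentum_eq {k : ℕ}
    (hv : v k = lam k + (((k : ℝ) - 1) / ((k : ℝ) + 2)) • (lam k - lam (k - 1))) :
    (((k + 1 : ℕ) + 1) / 2 : ℝ) • v k - (((k + 1 : ℕ) + 1) / 2 - 1 : ℝ) • lam k =
      ((k + 1) / 2 : ℝ) • lam k - ((k + 1) / 2 - 1 : ℝ) • lam (k - 1) := by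
  have hcoeff :
      ((k : ℝ) + 1 + 1) / 2 * (((k : ℝ) - 1) / ((k : ℝ) + 2)) = ((k : ℝ) + 1) / 2 - 1 := by
    field_simp
    ring
  rw [hv]
  push_cast
  rw [smul_add, smul_smul, hcoeff]
  module

theorem nesterovPotential_one_le (hv : v 0 = lam 0)
    (hstep : ∀ z, f (lam 1) - f z ≤ L * ⟪v 0 - lam 1, v 0 - z⟫ - L / 2 * ‖v 0 - lam 1‖ ^ 2) :
    nesterovPotential f L lam xstar 1 ≤ L / 2 * ‖lam 0 - xstar‖ ^ 2 := by
  have := potential_le_of_gradientStep (t := 1) (x := lam 0) (xs := xstar) le_rfl hstep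
  rw [hv] at this
  norm_num [nesterovPotential] at this ⊢
  exact this

theorem nesterovPotential_succ_le (hmin : ∀ x, f xstar ≤ f x) {k : ℕ}
    (hv : v k = lam k + (((k : ℝ) - 1) / ((k : ℝ) + 2)) • (lam k - lam (k - 1)))
    (hstep : ∀ z, f (lam (k + 1)) - f z ≤
      L * ⟪v k - lam (k + 1), v k - z⟫ - L / 2 * ‖v k - lam (k + 1)‖ ^ 2) :
    nesterovPotential f L lam xstar (k + 1) ≤ nesterovPotential f L lam xstar k := by
  have ht : (1 : ℝ) ≤ ((k + 1 : ℕ) + 1) / 2 := by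
    push_cast
    linarith [(k.cast_nonneg : (0 : ℝ) ≤ k)]
  have hdecrease := potential_le_of_gradientStep (x := lam k) (xs := xstar) ht hstep
  rw [nesterov_momentum_eq hv] at hdecrease
  have hweight :
      (((k + 1 : ℕ) + 1) / 2 : ℝ) ^ 2 - ((k + 1 : ℕ) + 1) / 2 ≤ ((k + 1) / 2 : ℝ) ^ 2 := by
    push_cast
    nlinarith
  have hgap := mul_le_mul_of_nonneg_right hweight (sub_nonneg.2 (hmin (lam k)))
  unfold nesterovPotential
  simp only [Nat.add_sub_cancel]
  linarith

theorem nesterovPotential_le (hmin : ∀ x, f xstar ≤ f x)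
    (hv : ∀ k : ℕ, v k = lam k + (((k : ℝ) - 1) / ((k : ℝ) + 2)) • (lam k - lam (k - 1)))
    (hstep : ∀ k z, f (lam (k + 1)) - f z ≤
      L * ⟪v k - lam (k + 1), v k - z⟫ - L / 2 * ‖v k - lam (k + 1)‖ ^ 2) :
    ∀ k, 1 ≤ k → nesterovPotential f L lam xstar k ≤ L / 2 * ‖lam 0 - xstar‖ ^ 2 := by
  intro k hk
  induction k, hk using Nat.le_induction with
  -- `0 - 1 = 0` in `ℕ`, so `hv 0` reads `v 0 = lam 0`: this is the initialization `λ⁻¹ = λ⁰`.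
  | base => exact nesterovPotential_one_le (by simpa using hv 0) (hstep 0)
  | succ k _ ih => exact (nesterovPotential_succ_le hmin (hv k) (hstep k)).trans ih

end Potential

theorem stmt_11 (n : ℕ) (f : EuclideanSpace ℝ (Fin n) → ℝ)
    (f' : EuclideanSpace ℝ (Fin n) → EuclideanSpace ℝ (Fin n))
    (hconv : ConvexOn ℝ Set.univ f)
    (hgrad : ∀ x, HasGradientAt f (f' x) x)
    (L : ℝ) (hL : 0 < L) (hlip : LipschitzWith (Real.toNNReal L) f')
    (lam v : ℕ → EuclideanSpace ℝ (Fin n))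
    (hv : ∀ k : ℕ, v k = lam k + (((k : ℝ) - 1) / ((k : ℝ) + 2)) • (lam k - lam (k - 1)))
    (hrec : ∀ k : ℕ, lam (k + 1) = v k - (1 / L) • f' (v k))
    (lamstar : EuclideanSpace ℝ (Fin n)) (hmin : ∀ x, f lamstar ≤ f x) :
    ∀ k : ℕ, 1 ≤ k →
      f (lam k) - f lamstar ≤ 2 * L * ‖lam 0 - lamstar‖ ^ 2 / ((k : ℝ) + 1) ^ 2 := by
  intro k hk
  have hpot := nesterovPotential_le hmin hv
    (fun k => hconv.gradientStep_sub_le hgrad hL hlip (hrec k)) k hk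
  have hweighted : ((k + 1) / 2 : ℝ) ^ 2 * (f (lam k) - f lamstar) ≤
      L / 2 * ‖lam 0 - lamstar‖ ^ 2 :=
    (le_add_of_nonneg_right (by positivity)).trans hpot
  rw [le_div_iff₀ (by positivity)]
  linarith
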